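/- For every p ∈ (1, ∞) there is a constant C_p, depending only on p, such that ‖ℳf‖_{L^p(∂T,ν)} ≤ C_p ‖f‖_{L^p(∂T,ν)} for every f ∈ L^p(∂T, ν). -/

import Mathlib

open MeasureTheory
open scoped ENNReal NNReal

/-- The punctured boundary `∂T` of the tree: maps `ω : ℤ → T` with `lev (ω j) = j`
and `par (ω j) = ω (j+1)`. -/
def PBoundary {T : Type*} (par : T → T) (lev : T → ℤ) : Type _ :=
  {ω : ℤ → T // (∀ j : ℤ, lev (ω j) = j) ∧ ∀ j : ℤ, par (ω j) = ω (j + 1)}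

/-- The boundary sector `∂T_x`. -/
def sector {T : Type*} (par : T → T) (lev : T → ℤ) (x : T) : Set (PBoundary par lev) :=
  {ω : PBoundary par lev | ω.1 (lev x) = x}

/-- The σ-algebra on `∂T` generated by the sectors. -/
instance {T : Type*} (par : T → T) (lev : T → ℤ) : MeasurableSpace (PBoundary par lev) :=
  MeasurableSpace.generateFrom (Set.range (sector par lev))

/-- The flow measure `m_ν x = ν (∂T_x)` (as a real number). -/
noncomputable def mnu {T : Type*} (par : T → T) (lev : T → ℤ)
    (ν : Measure (PBoundary par lev)) (x : T) : ℝ :=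
  (ν (sector par lev x)).toReal

/-- The Hardy–Littlewood maximal operator associated with `ν`. -/
noncomputable def maximal {T : Type*} (par : T → T) (lev : T → ℤ)
    (ν : Measure (PBoundary par lev)) (f : PBoundary par lev → ℝ)
    (ω : PBoundary par lev) : ℝ≥0∞ :=
  ⨆ x : {x : T // ω.1 (lev x) = x},
    (ν (sector par lev x.1))⁻¹ * ∫⁻ ξ in sector par lev x.1, ENNReal.ofReal |f ξ| ∂ν

universe u

/-!
Fix a level `N`. The points where some sector average along the path up to level `N` exceeds
`l` are covered by the sectors of the highest such nodes; these sectors are pairwise disjoint and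
each has measure at most `l⁻¹` times the integral of `h` over it, so letting `N → ∞` gives the weak
type (1,1) bound `ν {ℳh > l} ≤ l⁻¹ ∫ h` with constant 1. Since `h ≤ h · 1_{h > t} + t`, also
`ℳh ≤ ℳ(h · 1_{h > t}) + t`, which turns this into `ν {ℳh > 2t} ≤ t⁻¹ ∫_{h > t} h`; summing over
the dyadic levels `t = 2^k` (Marcinkiewicz interpolation) gives
`∫ (ℳh)^p ≤ 8^p (1 - 2^{1-p})⁻¹ ∫ h^p`.
-/

namespace ENNReal

lemma tsum_indicator_Iic_zpow {r : ℝ≥0∞} (hr : 1 < r) (hr_top : r ≠ ⊤) (L : ℤ) :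
    ∑' k : ℤ, (Set.Iic L).indicator (fun k => r ^ k) k = r ^ L * (1 - r⁻¹)⁻¹ := by
  have hr0 : r ≠ 0 := (zero_lt_one.trans hr).ne'
  have hinj : Function.Injective fun n : ℕ => L - n := fun a b hab => by simpa using hab
  have hsupp : Function.support ((Set.Iic L).indicator fun k => r ^ k) ⊆
      Set.range fun n : ℕ => L - n := fun k hk =>
    ⟨(L - k).toNat, by
      have := Set.mem_of_indicator_ne_zero hk
      simp only [Set.mem_Iic] at this
      show L - ((L - k).toNat : ℤ) = k
      omega⟩
  have hterm (n : ℕ) : (Set.Iic L).indicator (fun k => r ^ k) (L - n) = r ^ L * r⁻¹ ^ n := by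
    rw [Set.indicator_of_mem (by simp), ENNReal.zpow_sub hr0 hr_top, zpow_natCast,
      ← ENNReal.inv_pow]
  rw [← hinj.tsum_eq hsupp]
  simp only [hterm, ENNReal.tsum_mul_left, ENNReal.tsum_geometric]

lemma tsum_indicator_zpow_le {r : ℝ≥0∞} (hr : 1 < r) (hr_top : r ≠ ⊤) (y : ℝ≥0∞) :
    ∑' k : ℤ, {k | r ^ k ≤ y}.indicator (fun k => r ^ k) k ≤ (1 - r⁻¹)⁻¹ * y := by
  have hr0 : r ≠ 0 := (zero_lt_one.trans hr).ne'
  rcases eq_or_ne y ⊤ with rfl | hy_top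
  · rw [mul_top (ENNReal.inv_ne_zero.2 (ne_top_of_le_ne_top one_ne_top tsub_le_self))]
    exact le_top
  rcases eq_or_ne y 0 with rfl | hy0
  · simp [(ENNReal.zpow_pos hr0 hr_top _).ne']
  obtain ⟨L, hL, hL'⟩ := exists_mem_Ico_zpow hy0 hy_top hr hr_top
  have hsub : {k | r ^ k ≤ y} ⊆ Set.Iic L := fun k hk => by
    by_contra hkL
    exact (hL'.trans_le (zpow_le_of_le hr.le (by simpa using hkL))).not_ge hk
  calc ∑' k : ℤ, {k | r ^ k ≤ y}.indicator (fun k => r ^ k) k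
      ≤ ∑' k : ℤ, (Set.Iic L).indicator (fun k => r ^ k) k :=
        ENNReal.tsum_le_tsum fun k => Set.indicator_le_indicator_of_subset hsub (fun _ => zero_le) k
    _ = r ^ L * (1 - r⁻¹)⁻¹ := tsum_indicator_Iic_zpow hr hr_top L
    _ ≤ (1 - r⁻¹)⁻¹ * y := by rw [mul_comm]; gcongr

lemma tsum_zpow_rpow_eq_top {p : ℝ} (hp : 0 < p) : ∑' k : ℤ, ((2 : ℝ≥0∞) ^ k) ^ p = ⊤ := by
  refine top_le_iff.1 ?_
  calc (⊤ : ℝ≥0∞) = ∑' _ : ℕ, 1 := (ENNReal.tsum_const_eq_top_of_ne_zero one_ne_zero).symm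
    _ ≤ ∑' n : ℕ, ((2 : ℝ≥0∞) ^ (n : ℤ)) ^ p := ENNReal.tsum_le_tsum fun n =>
        one_le_rpow (by simpa using one_le_pow₀ one_le_two) hp
    _ ≤ ∑' k : ℤ, ((2 : ℝ≥0∞) ^ k) ^ p :=
        ENNReal.tsum_comp_le_tsum_of_injective Nat.cast_injective
          (fun k : ℤ => ((2 : ℝ≥0∞) ^ k) ^ p)

lemma rpow_le_tsum_indicator_dyadic {p : ℝ} (hp : 0 < p) (y : ℝ≥0∞) :
    y ^ p ≤
      8 ^ p * ∑' k : ℤ, (Set.Ioi (2 * 2 ^ k)).indicator (fun _ => ((2 : ℝ≥0∞) ^ k) ^ p) y := by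
  have h2 (k : ℤ) : (2 : ℝ≥0∞) ^ k ≠ ⊤ := zpow_ne_top two_ne_zero ofNat_ne_top k
  rcases eq_or_ne y 0 with rfl | hy0
  · simp [zero_rpow_of_pos hp]
  rcases eq_or_ne y ⊤ with rfl | hy_top
  · have hmem (k : ℤ) : (⊤ : ℝ≥0∞) ∈ Set.Ioi (2 * 2 ^ k) := mul_lt_top ofNat_lt_top (h2 k).lt_top
    simp only [Set.indicator_of_mem (hmem _), tsum_zpow_rpow_eq_top hp,
      mul_top (rpow_pos (by norm_num : (0 : ℝ≥0∞) < 8) ofNat_ne_top).ne', le_top]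
  -- With `2 ^ L ≤ y < 2 ^ (L + 1)`, the single term `k = L - 2` accounts for the factor `8 ^ p`.
  obtain ⟨L, hL, hL'⟩ := exists_mem_Ico_zpow hy0 hy_top one_lt_two ofNat_ne_top
  have hpow (m : ℤ) : (2 : ℝ≥0∞) ^ (m + 1) = 2 * 2 ^ m := by
    rw [ENNReal.zpow_add two_ne_zero ofNat_ne_top, zpow_one, mul_comm]
  have hmem : y ∈ Set.Ioi (2 * 2 ^ (L - 2)) := by
    have h0 : (2 : ℝ≥0∞) ^ (L - 2) ≠ 0 := (zpow_pos two_ne_zero ofNat_ne_top _).ne'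
    calc (2 : ℝ≥0∞) * 2 ^ (L - 2) < 2 * 2 ^ (L - 2) + 2 * 2 ^ (L - 2) :=
          lt_add_right (mul_ne_top ofNat_ne_top (h2 _)) (mul_ne_zero two_ne_zero h0)
      _ = 2 ^ L := by rw [← two_mul, ← hpow, ← hpow]; ring_nf
      _ ≤ y := hL
  calc y ^ p ≤ (2 ^ (L + 1)) ^ p := rpow_le_rpow hL'.le hp.le
    _ = 8 ^ p * ((2 : ℝ≥0∞) ^ (L - 2)) ^ p := by
        rw [← mul_rpow_of_nonneg _ _ hp.le]
        congr 1
        rw [show L + 1 = L - 2 + 1 + 1 + 1 by ring, hpow, hpow, hpow]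
        ring
    _ = 8 ^ p * (Set.Ioi (2 * 2 ^ (L - 2))).indicator (fun _ => ((2 : ℝ≥0∞) ^ (L - 2)) ^ p) y := by
        rw [Set.indicator_of_mem hmem]
    _ ≤ _ := by gcongr; exact ENNReal.le_tsum (L - 2)

lemma zpow_rpow_comm (x : ℝ≥0∞) (k : ℤ) (q : ℝ) : (x ^ k) ^ q = (x ^ q) ^ k := by
  rw [← rpow_intCast, ← rpow_mul, mul_comm, rpow_mul, rpow_intCast]

lemma tsum_indicator_zpow_rpow_mul_le {p : ℝ} (hp : 1 < p) (y : ℝ≥0∞) :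
    ∑' k : ℤ, {k | (2 : ℝ≥0∞) ^ k < y}.indicator (fun k => ((2 : ℝ≥0∞) ^ k) ^ (p - 1) * y) k ≤
      (1 - (2 ^ (p - 1))⁻¹)⁻¹ * y ^ p := by
  set r : ℝ≥0∞ := 2 ^ (p - 1)
  have hsub : {k : ℤ | (2 : ℝ≥0∞) ^ k < y} ⊆ {k | r ^ k ≤ y ^ (p - 1)} := fun k hk => by
    rw [Set.mem_ofPred_eq, ← zpow_rpow_comm]
    exact rpow_le_rpow (le_of_lt hk) (by linarith)
  calc ∑' k : ℤ, {k | (2 : ℝ≥0∞) ^ k < y}.indicator (fun k => ((2 : ℝ≥0∞) ^ k) ^ (p - 1) * y) k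
      = (∑' k : ℤ, {k | (2 : ℝ≥0∞) ^ k < y}.indicator (fun k => r ^ k) k) * y := by
        simp only [Set.indicator_mul_left, zpow_rpow_comm, ENNReal.tsum_mul_right, r]
    _ ≤ (∑' k : ℤ, {k | r ^ k ≤ y ^ (p - 1)}.indicator (fun k => r ^ k) k) * y := by
        gcongr
    _ ≤ (1 - r⁻¹)⁻¹ * y ^ (p - 1) * y := by
        gcongr
        exact tsum_indicator_zpow_le (one_lt_rpow one_lt_two (by linarith))
          (rpow_ne_top_of_nonneg (by linarith) ofNat_ne_top) _
    _ = (1 - r⁻¹)⁻¹ * y ^ p := by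
        rw [mul_assoc]
        congr 1
        conv_rhs => rw [show p = (p - 1) + 1 by ring]
        rw [rpow_add_of_nonneg _ _ (by linarith) zero_le_one, rpow_one]

lemma exists_pos_le_ofReal_rpow {a : ℝ≥0∞} (ha : a ≠ ⊤) {p : ℝ} (hp : 0 < p) :
    ∃ C : ℝ, 0 < C ∧ a ≤ ENNReal.ofReal C ^ p := by
  have ha' : a ^ p⁻¹ ≠ ⊤ := rpow_ne_top_of_nonneg (inv_nonneg.2 hp.le) ha
  refine ⟨(a ^ p⁻¹).toReal + 1, by positivity, ?_⟩
  calc a = (a ^ p⁻¹) ^ p := by rw [← rpow_mul, inv_mul_cancel₀ hp.ne', rpow_one]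
    _ ≤ ENNReal.ofReal ((a ^ p⁻¹).toReal + 1) ^ p := by
        gcongr
        exact (le_ofReal_iff_toReal_le ha' (by positivity)).2 (by linarith)

end ENNReal

section Interpolation

variable {α : Type*} [MeasurableSpace α] {μ : Measure α}

lemma lintegral_rpow_le_tsum_dyadic {p : ℝ} (hp : 0 < p) {M : α → ℝ≥0∞} (hM : Measurable M) :
    ∫⁻ x, M x ^ p ∂μ ≤ 8 ^ p * ∑' k : ℤ, ((2 : ℝ≥0∞) ^ k) ^ p * μ {x | 2 * 2 ^ k < M x} := by
  have hs (k : ℤ) : MeasurableSet {x | 2 * 2 ^ k < M x} := measurableSet_lt measurable_const hM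
  calc ∫⁻ x, M x ^ p ∂μ
      ≤ ∫⁻ x, 8 ^ p * ∑' k : ℤ,
          {x | 2 * 2 ^ k < M x}.indicator (fun _ => ((2 : ℝ≥0∞) ^ k) ^ p) x ∂μ :=
        lintegral_mono fun x => ENNReal.rpow_le_tsum_indicator_dyadic hp (M x)
    _ = 8 ^ p * ∑' k : ℤ, ((2 : ℝ≥0∞) ^ k) ^ p * μ {x | 2 * 2 ^ k < M x} := by
        rw [lintegral_const_mul' _ _ (ENNReal.rpow_ne_top_of_nonneg hp.le ENNReal.ofNat_ne_top),
          lintegral_tsum fun k => (measurable_const.indicator (hs k)).aemeasurable]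
        simp only [lintegral_indicator_const (hs _)]

theorem lintegral_rpow_le_of_weakType {p : ℝ} (hp : 1 < p) {M h : α → ℝ≥0∞}
    (hM : Measurable M) (hh : Measurable h)
    (hweak : ∀ t : ℝ≥0∞, t ≠ 0 → t ≠ ⊤ →
      μ {x | 2 * t < M x} ≤ t⁻¹ * ∫⁻ x in {x | t < h x}, h x ∂μ) :
    ∫⁻ x, M x ^ p ∂μ ≤ 8 ^ p * (1 - (2 ^ (p - 1))⁻¹)⁻¹ * ∫⁻ x, h x ^ p ∂μ := by
  have hs (k : ℤ) : MeasurableSet {x | 2 ^ k < h x} := measurableSet_lt measurable_const hh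
  have hlayer (k : ℤ) : ((2 : ℝ≥0∞) ^ k) ^ p * μ {x | 2 * 2 ^ k < M x} ≤
      ∫⁻ x, {x | 2 ^ k < h x}.indicator (fun x => ((2 : ℝ≥0∞) ^ k) ^ (p - 1) * h x) x ∂μ := by
    have h0 : (2 : ℝ≥0∞) ^ k ≠ 0 := (ENNReal.zpow_pos two_ne_zero ENNReal.ofNat_ne_top k).ne'
    have h_top : (2 : ℝ≥0∞) ^ k ≠ ⊤ := ENNReal.zpow_ne_top two_ne_zero ENNReal.ofNat_ne_top k
    calc ((2 : ℝ≥0∞) ^ k) ^ p * μ {x | 2 * 2 ^ k < M x}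
        ≤ ((2 : ℝ≥0∞) ^ k) ^ p * ((2 ^ k)⁻¹ * ∫⁻ x in {x | 2 ^ k < h x}, h x ∂μ) := by
          gcongr; exact hweak _ h0 h_top
      _ = ((2 : ℝ≥0∞) ^ k) ^ (p - 1) * ∫⁻ x in {x | 2 ^ k < h x}, h x ∂μ := by
          rw [← mul_assoc, ENNReal.rpow_sub _ _ h0 h_top, ENNReal.rpow_one, div_eq_mul_inv]
      _ = _ := by rw [lintegral_indicator (hs k), lintegral_const_mul _ hh]
  calc ∫⁻ x, M x ^ p ∂μ
      ≤ 8 ^ p * ∑' k : ℤ, ((2 : ℝ≥0∞) ^ k) ^ p * μ {x | 2 * 2 ^ k < M x} :=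
        lintegral_rpow_le_tsum_dyadic (by linarith) hM
    _ ≤ 8 ^ p * ∑' k : ℤ, ∫⁻ x, {x | 2 ^ k < h x}.indicator
          (fun x => ((2 : ℝ≥0∞) ^ k) ^ (p - 1) * h x) x ∂μ := by
        gcongr with k; exact hlayer k
    _ = 8 ^ p * ∫⁻ x, ∑' k : ℤ, {x | 2 ^ k < h x}.indicator
          (fun x => ((2 : ℝ≥0∞) ^ k) ^ (p - 1) * h x) x ∂μ := by
        rw [lintegral_tsum fun k => ((hh.const_mul _).indicator (hs k)).aemeasurable]
    _ ≤ 8 ^ p * ∫⁻ x, (1 - (2 ^ (p - 1))⁻¹)⁻¹ * h x ^ p ∂μ := by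
        gcongr with x; exact ENNReal.tsum_indicator_zpow_rpow_mul_le hp (h x)
    _ = 8 ^ p * (1 - (2 ^ (p - 1))⁻¹)⁻¹ * ∫⁻ x, h x ^ p ∂μ := by
        rw [lintegral_const_mul _ (hh.pow_const p), mul_assoc]

end Interpolation

section Tree

variable {T : Type*} {par : T → T} {lev : T → ℤ}

namespace PBoundary

lemma apply_add_nat (ω : PBoundary par lev) (j : ℤ) (n : ℕ) :
    ω.1 (j + n) = par^[n] (ω.1 j) := by
  induction n with
  | zero => simp
  | succ n ih => rw [Nat.cast_succ, ← add_assoc, ← ω.2.2, ih, Function.iterate_succ_apply']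

lemma mem_sector_apply (ω : PBoundary par lev) (j : ℤ) : ω ∈ sector par lev (ω.1 j) := by
  show ω.1 (lev (ω.1 j)) = ω.1 j
  rw [ω.2.1 j]

end PBoundary

lemma finite_preimage_iterate (hfin : ∀ x : T, {y | par y = x}.Finite) (n : ℕ) (z : T) :
    (par^[n] ⁻¹' {z}).Finite := by
  induction n generalizing z with
  | zero => exact Set.finite_singleton z
  | succ n ih =>
    rw [Function.iterate_succ, Set.preimage_comp]
    exact (ih z).preimage' fun b _ => hfin b

lemma countable_of_finite_fibers (hfin : ∀ x : T, {y | par y = x}.Finite)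
    (hconn : ∀ x y : T, ∃ n m : ℕ, par^[n] x = par^[m] y) (x₀ : T) : Countable T := by
  have huniv : ⋃ (m : ℕ) (n : ℕ), par^[n] ⁻¹' {par^[m] x₀} = Set.univ := by
    refine Set.eq_univ_of_forall fun y => ?_
    obtain ⟨n, m, h⟩ := hconn y x₀
    exact Set.mem_iUnion₂.2 ⟨m, n, h⟩
  rw [← Set.countable_univ_iff, ← huniv]
  exact Set.countable_iUnion fun m => Set.countable_iUnion fun n =>
    (finite_preimage_iterate hfin n _).countable

lemma measurableSet_sector (x : T) : MeasurableSet (sector par lev x) :=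
  MeasurableSpace.measurableSet_generateFrom ⟨x, rfl⟩

lemma measurable_comp_apply [Countable T] {β : Type*} [MeasurableSpace β] (g : T → β) (j : ℤ) :
    Measurable fun ω : PBoundary par lev => g (ω.1 j) := by
  let _ : MeasurableSpace T := ⊤
  refine measurable_from_top.comp (measurable_to_countable' fun x => ?_)
  by_cases hx : lev x = j
  · subst hx
    exact measurableSet_sector x
  · have hempty : (fun ω : PBoundary par lev => ω.1 j) ⁻¹' {x} = ∅ :=
      Set.eq_empty_of_forall_notMem fun ω (hω : ω.1 j = x) => hx (hω ▸ ω.2.1 j)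
    rw [hempty]
    exact .empty

noncomputable def sectorAverage (ν : Measure (PBoundary par lev)) (h : PBoundary par lev → ℝ≥0∞)
    (x : T) : ℝ≥0∞ :=
  (ν (sector par lev x))⁻¹ * ∫⁻ ξ in sector par lev x, h ξ ∂ν

noncomputable def maximalENN (ν : Measure (PBoundary par lev)) (h : PBoundary par lev → ℝ≥0∞)
    (ω : PBoundary par lev) : ℝ≥0∞ :=
  ⨆ j : ℤ, sectorAverage ν h (ω.1 j)

variable {ν : Measure (PBoundary par lev)} {h g : PBoundary par lev → ℝ≥0∞}

lemma maximal_eq_maximalENN (f : PBoundary par lev → ℝ) :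
    maximal par lev ν f = maximalENN ν fun ξ => ENNReal.ofReal |f ξ| := by
  funext ω
  refine le_antisymm (iSup_le fun x => ?_) (iSup_le fun j => ?_)
  · have := le_iSup (fun j => sectorAverage ν (fun ξ => ENNReal.ofReal |f ξ|) (ω.1 j)) (lev x.1)
    rwa [x.2] at this
  · exact le_iSup_of_le ⟨ω.1 j, by rw [ω.2.1 j]⟩ le_rfl

lemma maximalENN_congr_ae (hae : h =ᵐ[ν] g) : maximalENN ν h = maximalENN ν g := by
  funext ω
  refine iSup_congr fun j => ?_
  rw [sectorAverage, sectorAverage, lintegral_congr_ae (ae_restrict_of_ae hae)]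

lemma measurable_maximalENN [Countable T] : Measurable (maximalENN ν h) :=
  Measurable.iSup fun j => measurable_comp_apply (sectorAverage ν h) j

lemma sectorAverage_le_add {c : ℝ≥0∞} (hle : ∀ ξ, h ξ ≤ g ξ + c) (x : T) :
    sectorAverage ν h x ≤ sectorAverage ν g x + c := by
  set S := sector par lev x
  calc (ν S)⁻¹ * ∫⁻ ξ in S, h ξ ∂ν ≤ (ν S)⁻¹ * ∫⁻ ξ in S, (g ξ + c) ∂ν := by
        gcongr with ξ; exact hle ξ
    _ = (ν S)⁻¹ * ∫⁻ ξ in S, g ξ ∂ν + c * ((ν S)⁻¹ * ν S) := by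
        rw [lintegral_add_right _ measurable_const, setLIntegral_const]; ring
    _ ≤ (ν S)⁻¹ * ∫⁻ ξ in S, g ξ ∂ν + c := by
        gcongr; exact mul_le_of_le_one_right' (ENNReal.inv_mul_le_one _)

lemma maximalENN_le_add {c : ℝ≥0∞} (hle : ∀ ξ, h ξ ≤ g ξ + c) (ω : PBoundary par lev) :
    maximalENN ν h ω ≤ maximalENN ν g ω + c :=
  iSup_le fun j => (sectorAverage_le_add hle _).trans <|
    add_le_add (le_iSup (fun j => sectorAverage ν g (ω.1 j)) j) le_rfl

lemma measure_sector_le_of_lt_sectorAverage {l : ℝ≥0∞} (hl : l ≠ 0) {x : T}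
    (hx : l < sectorAverage ν h x) :
    ν (sector par lev x) ≤ l⁻¹ * ∫⁻ ξ in sector par lev x, h ξ ∂ν := by
  set S := sector par lev x
  have hmul : l * ν S ≤ ∫⁻ ξ in S, h ξ ∂ν :=
    calc l * ν S ≤ (ν S)⁻¹ * (∫⁻ ξ in S, h ξ ∂ν) * ν S := by gcongr; exact hx.le
      _ = (∫⁻ ξ in S, h ξ ∂ν) * ((ν S)⁻¹ * ν S) := by ring
      _ ≤ ∫⁻ ξ in S, h ξ ∂ν := mul_le_of_le_one_right' (ENNReal.inv_mul_le_one _)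
  calc ν S = l⁻¹ * (l * ν S) := by rw [← mul_assoc, ENNReal.inv_mul_cancel hl hx.ne_top, one_mul]
    _ ≤ l⁻¹ * ∫⁻ ξ in S, h ξ ∂ν := by gcongr

variable (ν h) in
def stoppingNodes (l : ℝ≥0∞) (N : ℤ) : Set T :=
  {x | lev x ≤ N ∧ l < sectorAverage ν h x ∧
    ∀ n : ℕ, 0 < n → lev x + n ≤ N → sectorAverage ν h (par^[n] x) ≤ l}

lemma subset_biUnion_stoppingNodes (l : ℝ≥0∞) (N : ℤ) :
    {ω : PBoundary par lev | ∃ j ≤ N, l < sectorAverage ν h (ω.1 j)} ⊆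
      ⋃ x ∈ stoppingNodes ν h l N, sector par lev x := by
  rintro ω ⟨j, hjN, hj⟩
  obtain ⟨m, ⟨hmN, hm⟩, hmax⟩ := Int.exists_greatest_of_bdd
    (P := fun i => i ≤ N ∧ l < sectorAverage ν h (ω.1 i)) ⟨N, fun i hi => hi.1⟩ ⟨j, hjN, hj⟩
  refine Set.mem_biUnion ⟨by rwa [ω.2.1 m], hm, fun n hn hnN => ?_⟩ (ω.mem_sector_apply m)
  rw [ω.2.1 m] at hnN
  rw [← ω.apply_add_nat]
  exact not_lt.1 fun hlt => by have := hmax _ ⟨hnN, hlt⟩; omega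

lemma pairwiseDisjoint_stoppingNodes (l : ℝ≥0∞) (N : ℤ) :
    (stoppingNodes ν h l N).PairwiseDisjoint (sector par lev) := by
  have eq_of_lev_le : ∀ x ∈ stoppingNodes ν h l N, ∀ y ∈ stoppingNodes ν h l N, ∀ ω : PBoundary par lev,
      ω.1 (lev x) = x → ω.1 (lev y) = y → lev x ≤ lev y → x = y := by
    intro x hx y hy ω hωx hωy hxy
    obtain ⟨n, hn⟩ : ∃ n : ℕ, lev y = lev x + n := ⟨(lev y - lev x).toNat, by omega⟩
    have hyx : y = par^[n] x := by rw [← hωy, hn, ω.apply_add_nat, hωx]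
    rcases Nat.eq_zero_or_pos n with rfl | hpos
    · exact hyx.symm
    · exact absurd hy.2.1 (not_lt.2 (hyx ▸ hx.2.2 n hpos (hn ▸ hy.1)))
  intro x hx y hy hne
  refine Set.disjoint_left.2 fun ω hωx hωy => hne ?_
  rcases le_total (lev x) (lev y) with hle | hle
  · exact eq_of_lev_le x hx y hy ω hωx hωy hle
  · exact (eq_of_lev_le y hy x hx ω hωy hωx hle).symm

lemma measure_le_of_stoppingNodes [Countable T] {l : ℝ≥0∞} (hl : l ≠ 0) (N : ℤ) :
    ν {ω | ∃ j ≤ N, l < sectorAverage ν h (ω.1 j)} ≤ l⁻¹ * ∫⁻ ω, h ω ∂ν := by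
  set S := stoppingNodes ν h l N
  calc ν {ω | ∃ j ≤ N, l < sectorAverage ν h (ω.1 j)}
      ≤ ν (⋃ x ∈ S, sector par lev x) := measure_mono (subset_biUnion_stoppingNodes l N)
    _ = ∑' x : S, ν (sector par lev x) :=
        measure_biUnion S.to_countable (pairwiseDisjoint_stoppingNodes l N)
          fun x _ => measurableSet_sector x
    _ ≤ ∑' x : S, l⁻¹ * ∫⁻ ξ in sector par lev x, h ξ ∂ν :=
        ENNReal.tsum_le_tsum fun x => measure_sector_le_of_lt_sectorAverage hl x.2.2.1
    _ = l⁻¹ * ∫⁻ ξ in ⋃ x ∈ S, sector par lev x, h ξ ∂ν := by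
        rw [ENNReal.tsum_mul_left, lintegral_biUnion S.to_countable
          (fun x _ => measurableSet_sector x) (pairwiseDisjoint_stoppingNodes l N)]
    _ ≤ l⁻¹ * ∫⁻ ω, h ω ∂ν := mul_le_mul_right (setLIntegral_le_lintegral _ _) _

theorem measure_lt_maximalENN_le [Countable T] {l : ℝ≥0∞} (hl : l ≠ 0) :
    ν {ω | l < maximalENN ν h ω} ≤ l⁻¹ * ∫⁻ ω, h ω ∂ν := by
  have hunion : {ω | l < maximalENN ν h ω} =
      ⋃ N : ℤ, {ω : PBoundary par lev | ∃ j ≤ N, l < sectorAverage ν h (ω.1 j)} := by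
    ext ω
    simp only [Set.mem_ofPred_eq, maximalENN, lt_iSup_iff, Set.mem_iUnion]
    exact ⟨fun ⟨j, hj⟩ => ⟨j, j, le_rfl, hj⟩, fun ⟨_, j, _, hj⟩ => ⟨j, hj⟩⟩
  have hmono : Monotone fun N : ℤ =>
      {ω : PBoundary par lev | ∃ j ≤ N, l < sectorAverage ν h (ω.1 j)} :=
    fun _ _ hN _ ⟨j, hj, hlt⟩ => ⟨j, hj.trans hN, hlt⟩
  rw [hunion, hmono.measure_iUnion]
  exact iSup_le fun N => measure_le_of_stoppingNodes hl N

theorem measure_two_mul_lt_maximalENN_le [Countable T] (hh : Measurable h) {t : ℝ≥0∞}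
    (ht0 : t ≠ 0) (ht_top : t ≠ ⊤) :
    ν {ω | 2 * t < maximalENN ν h ω} ≤ t⁻¹ * ∫⁻ ω in {ω | t < h ω}, h ω ∂ν := by
  have hs : MeasurableSet {ω | t < h ω} := measurableSet_lt measurable_const hh
  have hle (ξ : PBoundary par lev) : h ξ ≤ {ω | t < h ω}.indicator h ξ + t := by
    by_cases hξ : t < h ξ
    · rw [Set.indicator_of_mem (show ξ ∈ {ω | t < h ω} from hξ)]
      exact le_self_add
    · rw [Set.indicator_of_notMem (show ξ ∉ {ω | t < h ω} from hξ), zero_add]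
      exact not_lt.1 hξ
  have hsub : {ω | 2 * t < maximalENN ν h ω} ⊆
      {ω | t < maximalENN ν ({ω | t < h ω}.indicator h) ω} := fun ω (hω : 2 * t < _) =>
    (ENNReal.add_lt_add_iff_right ht_top).1 ((two_mul t ▸ hω).trans_le (maximalENN_le_add hle ω))
  calc ν {ω | 2 * t < maximalENN ν h ω}
      ≤ ν {ω | t < maximalENN ν ({ω | t < h ω}.indicator h) ω} := measure_mono hsub
    _ ≤ t⁻¹ * ∫⁻ ω, {ω | t < h ω}.indicator h ω ∂ν := measure_lt_maximalENN_le ht0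
    _ = t⁻¹ * ∫⁻ ω in {ω | t < h ω}, h ω ∂ν := by rw [lintegral_indicator hs]

theorem lintegral_maximalENN_rpow_le [Countable T] {p : ℝ} (hp : 1 < p) (hh : Measurable h) :
    ∫⁻ ω, maximalENN ν h ω ^ p ∂ν ≤ 8 ^ p * (1 - (2 ^ (p - 1))⁻¹)⁻¹ * ∫⁻ ω, h ω ^ p ∂ν :=
  lintegral_rpow_le_of_weakType hp measurable_maximalENN hh fun _ ht0 ht_top =>
    measure_two_mul_lt_maximalENN_le hh ht0 ht_top

theorem lintegral_maximal_rpow_le [Countable T] {p : ℝ} (hp : 1 < p) {f : PBoundary par lev → ℝ}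
    (hf : AEMeasurable f ν) :
    ∫⁻ ω, maximal par lev ν f ω ^ p ∂ν ≤
      8 ^ p * (1 - (2 ^ (p - 1))⁻¹)⁻¹ * ∫⁻ ω, ENNReal.ofReal |f ω| ^ p ∂ν := by
  have hae : (fun ξ => ENNReal.ofReal |f ξ|) =ᵐ[ν] fun ξ => ENNReal.ofReal |hf.mk f ξ| :=
    hf.ae_eq_mk.mono fun ξ hξ => by simp only [hξ]
  rw [maximal_eq_maximalENN, maximalENN_congr_ae hae,
    lintegral_congr_ae (hae.mono fun ξ hξ => congrArg (· ^ p) hξ)]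
  exact lintegral_maximalENN_rpow_le hp hf.measurable_mk.abs.ennreal_ofReal

end Tree

/-- For every `p ∈ (1,∞)` there is a constant `C_p` depending only on `p`
such that `‖ℳ f‖_{L^p(ν)} ≤ C_p ‖f‖_{L^p(ν)}` for every `f ∈ L^p(∂T, ν)`. -/
theorem stmt1 (p : ℝ) (hp : 1 < p) :
    ∃ C : ℝ, 0 < C ∧
      ∀ (T : Type u) (par : T → T) (lev : T → ℤ),
        Nonempty T →
        (∀ x : T, lev (par x) = lev x + 1) →
        (∀ x : T, {y : T | par y = x}.Finite) →
        (∀ x : T, ∃ y : T, par y = x) →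
        (∀ x y : T, ∃ n m : ℕ, par^[n] x = par^[m] y) →
        ∀ ν : Measure (PBoundary par lev),
          (∀ x : T, 0 < ν (sector par lev x) ∧ ν (sector par lev x) < ⊤) →
          ∀ f : PBoundary par lev → ℝ, MemLp f (ENNReal.ofReal p) ν →
            ∫⁻ ω, maximal par lev ν f ω ^ p ∂ν
              ≤ ENNReal.ofReal C ^ p * ∫⁻ ω, ENNReal.ofReal |f ω| ^ p ∂ν := by
  have hp0 : 0 < p := by linarith
  have hK : (8 : ℝ≥0∞) ^ p * (1 - (2 ^ (p - 1))⁻¹)⁻¹ ≠ ⊤ :=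
    ENNReal.mul_ne_top (ENNReal.rpow_ne_top_of_nonneg hp0.le ENNReal.ofNat_ne_top)
      (ENNReal.inv_ne_top.2 (tsub_pos_iff_lt.2 (ENNReal.inv_lt_one.2
        (ENNReal.one_lt_rpow ENNReal.one_lt_two (by linarith)))).ne')
  obtain ⟨C, hC, hKC⟩ := ENNReal.exists_pos_le_ofReal_rpow hK hp0
  refine ⟨C, hC, fun T par lev hne _ hfin _ hconn ν _ f hf => ?_⟩
  have : Countable T := countable_of_finite_fibers hfin hconn hne.some
  exact (lintegral_maximal_rpow_le hp hf.aestronglyMeasurable.aemeasurable).trans (by gcongr)
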